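/- Let Θ = Θ₁ × Θ₂ × Θ₃ with each Θᵢ ⊆ ℝ^{Dᵢ} open. Let g₂ : Θ₂ × ℝ^{m₂} → ℝ^{m₁}, and suppose there is a transformation T : ℝ × Θ₂ → Θ₂ with T(0, θ₂) = θ₂ for all θ₂, ε ↦ T(ε, θ₂) differentiable at ε = 0, and g₂(T(ε, θ₂), x') = g₂(θ₂, x') for all ε ∈ ℝ, θ₂ ∈ Θ₂ and x' ∈ ℝ^{m₂} (T leaves g₂ invariant). Let h : Θ₂ → ℝ be differentiable with ∇h(θ₂) = ∂_ε T(ε, θ₂)|_{ε=0} for all θ₂. Let g₁ : Θ₁ × ℝ^{m₁} → ℝⁿ and g₃ : Θ₃ × ℝ^m → ℝ^{m₂}, define the composed network g(θ, x) = g₁(θ₁, g₂(θ₂, g₃(θ₃, x))) for θ = (θ₁, θ₂, θ₃) ∈ Θ, and suppose that for given data points x₁, …, x_N ∈ ℝ^m, labels y₁, …, y_N, and a loss ℓ, the function L(θ) = (1/N) Σᵢ ℓ(g(θ, xᵢ), yᵢ) is differentiable on Θ. Then along any gradient-flow trajectory θ(t) of L, the quantity h(θ₂(t)) is constant: a conservation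 law of a sub-network obtained via an invariance of the sub-network yields a conservation law of the global network. -/

import Mathlib

/-- Block `θ₁` of a parameter vector in `ℝ^{D₁} × ℝ^{D₂} × ℝ^{D₃}` (modeled with a sum
index so that the product carries the Euclidean inner product). -/
noncomputable def par1 (D₁ D₂ D₃ : ℕ)
    (θ : EuclideanSpace ℝ (Fin D₁ ⊕ Fin D₂ ⊕ Fin D₃)) : EuclideanSpace ℝ (Fin D₁) :=
  (EuclideanSpace.equiv (Fin D₁) ℝ).symm fun i => θ (Sum.inl i)

/-- Block `θ₂`. -/
noncomputable def par2 (D₁ D₂ D₃ : ℕ)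
    (θ : EuclideanSpace ℝ (Fin D₁ ⊕ Fin D₂ ⊕ Fin D₃)) : EuclideanSpace ℝ (Fin D₂) :=
  (EuclideanSpace.equiv (Fin D₂) ℝ).symm fun i => θ (Sum.inr (Sum.inl i))

/-- Block `θ₃`. -/
noncomputable def par3 (D₁ D₂ D₃ : ℕ)
    (θ : EuclideanSpace ℝ (Fin D₁ ⊕ Fin D₂ ⊕ Fin D₃)) : EuclideanSpace ℝ (Fin D₃) :=
  (EuclideanSpace.equiv (Fin D₃) ℝ).symm fun i => θ (Sum.inr (Sum.inr i))

/-! The transformation `T` of the middle block lifts to the transformation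
`ε ↦ (θ₁, T(ε, θ₂), θ₃)` of the whole parameter space, which leaves the loss `L` invariant and
whose generator at `θ` is the gradient of `θ ↦ h(θ₂)`. Differentiating the invariance at `ε = 0`
shows that this gradient is orthogonal to `∇L(θ)`, so along a gradient flow
`d/dt h(θ₂(t)) = -⟪∇(h ∘ par2), ∇L⟫ = 0`. -/

open Filter Topology
open scoped Gradient InnerProduct RealInnerProductSpace

theorem Convex.is_const_of_hasDerivAt_eq_zero {F : Type*} [NormedAddCommGroup F]
    [NormedSpace ℝ F] {s : Set ℝ} {f : ℝ → F} (hs : Convex ℝ s)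
    (hf : ∀ t ∈ s, HasDerivAt f 0 t) {a b : ℝ} (ha : a ∈ s) (hb : b ∈ s) : f a = f b := by
  have := hs.norm_image_sub_le_of_norm_hasDerivWithin_le (C := 0)
    (fun t ht => (hf t ht).hasDerivWithinAt) (fun _ _ => by simp) hb ha
  simpa [sub_eq_zero] using this

section Gradient

variable {E : Type*} [NormedAddCommGroup E] [InnerProductSpace ℝ E] [CompleteSpace E]

theorem HasGradientAt.comp_continuousLinearMap {F : Type*} [NormedAddCommGroup F]
    [InnerProductSpace ℝ F] [CompleteSpace F] {h : F → ℝ} {w : F} (P : E →L[ℝ] F) {x : E}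
    (hh : HasGradientAt h w (P x)) : HasGradientAt (fun x => h (P x)) ((P†) w) x := by
  rw [hasGradientAt_iff_hasFDerivAt] at hh ⊢
  refine (hh.comp x P.hasFDerivAt).congr_fderiv ?_
  ext v
  simp [ContinuousLinearMap.adjoint_inner_left]

theorem HasGradientAt.comp_hasDerivAt {H : E → ℝ} {w v : E} {γ : ℝ → E} {t : ℝ}
    (hH : HasGradientAt H w (γ t)) (hγ : HasDerivAt γ v t) :
    HasDerivAt (fun u => H (γ u)) ⟪w, v⟫ t :=
  hH.hasFDerivAt.comp_hasDerivAt t hγ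

theorem inner_gradient_eq_zero_of_invariant {L : E → ℝ} {θ v : E} {c : ℝ → E} {ε₀ : ℝ}
    (hL : DifferentiableAt ℝ L θ) (hc : HasDerivAt c v ε₀) (hc₀ : c ε₀ = θ)
    (hinv : ∀ᶠ ε in 𝓝 ε₀, L (c ε) = L θ) : ⟪∇ L θ, v⟫ = 0 := by
  rw [← hc₀] at hL
  have hderiv := hL.hasGradientAt.comp_hasDerivAt hc
  rw [hc₀] at hderiv
  exact hderiv.unique ((hasDerivAt_const ε₀ (L θ)).congr_of_eventuallyEq hinv)

theorem Convex.is_const_of_gradientFlow_of_inner_gradient_eq_zero {L H : E → ℝ} {s : Set ℝ}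
    (hs : Convex ℝ s) {θc : ℝ → E} (hflow : ∀ t ∈ s, HasDerivAt θc (-∇ L (θc t)) t)
    (hH : ∀ t ∈ s, DifferentiableAt ℝ H (θc t))
    (horth : ∀ t ∈ s, ⟪∇ L (θc t), ∇ H (θc t)⟫ = 0) :
    ∀ a ∈ s, ∀ b ∈ s, H (θc a) = H (θc b) := by
  refine fun a ha b hb => hs.is_const_of_hasDerivAt_eq_zero (f := fun t => H (θc t))
    (fun t ht => ?_) ha hb
  have hderiv := (hH t ht).hasGradientAt.comp_hasDerivAt (hflow t ht)
  rwa [inner_neg_right, real_inner_comm, horth t ht, neg_zero] at hderiv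

end Gradient

section Blocks

variable {D₁ D₂ D₃ : ℕ}

local notation "ℝ^D" => EuclideanSpace ℝ (Fin D₁ ⊕ Fin D₂ ⊕ Fin D₃)

theorem isOpen_setOf_par_mem {Θ₁ : Set (EuclideanSpace ℝ (Fin D₁))}
    {Θ₂ : Set (EuclideanSpace ℝ (Fin D₂))} {Θ₃ : Set (EuclideanSpace ℝ (Fin D₃))}
    (hΘ₁ : IsOpen Θ₁) (hΘ₂ : IsOpen Θ₂) (hΘ₃ : IsOpen Θ₃) :
    IsOpen {θ | par1 D₁ D₂ D₃ θ ∈ Θ₁ ∧ par2 D₁ D₂ D₃ θ ∈ Θ₂ ∧ par3 D₁ D₂ D₃ θ ∈ Θ₃} := by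
  unfold par1 par2 par3
  exact (hΘ₁.preimage (by fun_prop)).inter
    ((hΘ₂.preimage (by fun_prop)).inter (hΘ₃.preimage (by fun_prop)))

variable (D₁ D₂ D₃) in
noncomputable def par2CLM : ℝ^D →L[ℝ] EuclideanSpace ℝ (Fin D₂) :=
  LinearMap.toContinuousLinearMap
    { toFun := par2 D₁ D₂ D₃
      map_add' := fun _ _ => rfl
      map_smul' := fun _ _ => rfl }

@[simp]
theorem coe_par2CLM : ⇑(par2CLM D₁ D₂ D₃) = par2 D₁ D₂ D₃ := rfl

variable (D₁ D₂ D₃) in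
noncomputable def embed2CLM : EuclideanSpace ℝ (Fin D₂) →L[ℝ] ℝ^D :=
  LinearMap.toContinuousLinearMap
    { toFun := fun v => WithLp.toLp 2 (Sum.elim 0 (Sum.elim v.ofLp 0))
      map_add' := by intro v w; ext (j | j | j) <;> simp
      map_smul' := by intro c v; ext (j | j | j) <;> simp }

theorem adjoint_par2CLM : (par2CLM D₁ D₂ D₃)† = embed2CLM D₁ D₂ D₃ := by
  refine ((ContinuousLinearMap.eq_adjoint_iff _ _).2 fun v θ => ?_).symm
  simp [PiLp.inner_apply, Fintype.sum_sum_type, embed2CLM, par2]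

noncomputable def updatePar2 (θ : ℝ^D) (v : EuclideanSpace ℝ (Fin D₂)) : ℝ^D :=
  θ + embed2CLM D₁ D₂ D₃ (v - par2 D₁ D₂ D₃ θ)

@[simp]
theorem par1_updatePar2 (θ : ℝ^D) (v : EuclideanSpace ℝ (Fin D₂)) :
    par1 D₁ D₂ D₃ (updatePar2 θ v) = par1 D₁ D₂ D₃ θ := by
  ext i; simp [updatePar2, embed2CLM, par1]

@[simp]
theorem par2_updatePar2 (θ : ℝ^D) (v : EuclideanSpace ℝ (Fin D₂)) :
    par2 D₁ D₂ D₃ (updatePar2 θ v) = v := by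
  ext i; simp [updatePar2, embed2CLM, par2]

@[simp]
theorem par3_updatePar2 (θ : ℝ^D) (v : EuclideanSpace ℝ (Fin D₂)) :
    par3 D₁ D₂ D₃ (updatePar2 θ v) = par3 D₁ D₂ D₃ θ := by
  ext i; simp [updatePar2, embed2CLM, par3]

@[simp]
theorem updatePar2_par2 (θ : ℝ^D) : updatePar2 θ (par2 D₁ D₂ D₃ θ) = θ := by
  simp [updatePar2]

theorem HasDerivAt.updatePar2 {θ : ℝ^D} {c : ℝ → EuclideanSpace ℝ (Fin D₂)}
    {v : EuclideanSpace ℝ (Fin D₂)} {ε : ℝ} (hc : HasDerivAt c v ε) :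
    HasDerivAt (fun ε => updatePar2 θ (c ε)) (embed2CLM D₁ D₂ D₃ v) ε :=
  ((embed2CLM D₁ D₂ D₃).hasFDerivAt.comp_hasDerivAt ε (hc.sub_const _)).const_add θ

theorem inner_gradient_comp_par2_eq_zero_of_invariant {L : ℝ^D → ℝ}
    {h : EuclideanSpace ℝ (Fin D₂) → ℝ}
    {T : ℝ → EuclideanSpace ℝ (Fin D₂) → EuclideanSpace ℝ (Fin D₂)}
    {θ : ℝ^D} (hL : DifferentiableAt ℝ L θ) (hh : DifferentiableAt ℝ h (par2 D₁ D₂ D₃ θ))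
    (hT0 : T 0 (par2 D₁ D₂ D₃ θ) = par2 D₁ D₂ D₃ θ)
    (hgen : HasDerivAt (fun ε => T ε (par2 D₁ D₂ D₃ θ)) (∇ h (par2 D₁ D₂ D₃ θ)) 0)
    (hinv : ∀ ε, L (updatePar2 θ (T ε (par2 D₁ D₂ D₃ θ))) = L θ) :
    ⟪∇ L θ, ∇ (fun θ => h (par2 D₁ D₂ D₃ θ)) θ⟫ = 0 := by
  have hgrad := hh.hasGradientAt.comp_continuousLinearMap (par2CLM D₁ D₂ D₃)
  simp only [adjoint_par2CLM, coe_par2CLM] at hgrad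
  rw [hgrad.gradient]
  exact inner_gradient_eq_zero_of_invariant hL hgen.updatePar2 (by rw [hT0, updatePar2_par2])
    (Eventually.of_forall hinv)

end Blocks

theorem subnetwork_invariance_gives_global_conservation_law_general
    (D₁ D₂ D₃ m m₁ m₂ n N : ℕ)
    (Θ₁ : Set (EuclideanSpace ℝ (Fin D₁))) (hΘ₁ : IsOpen Θ₁)
    (Θ₂ : Set (EuclideanSpace ℝ (Fin D₂))) (hΘ₂ : IsOpen Θ₂)
    (Θ₃ : Set (EuclideanSpace ℝ (Fin D₃))) (hΘ₃ : IsOpen Θ₃)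
    (g₁ : EuclideanSpace ℝ (Fin D₁) → (Fin m₁ → ℝ) → (Fin n → ℝ))
    (g₂ : EuclideanSpace ℝ (Fin D₂) → (Fin m₂ → ℝ) → (Fin m₁ → ℝ))
    (g₃ : EuclideanSpace ℝ (Fin D₃) → (Fin m → ℝ) → (Fin m₂ → ℝ))
    (T : ℝ → EuclideanSpace ℝ (Fin D₂) → EuclideanSpace ℝ (Fin D₂))
    (hT0 : ∀ θ₂ ∈ Θ₂, T 0 θ₂ = θ₂)
    (hTinv : ∀ (ε : ℝ), ∀ θ₂ ∈ Θ₂, ∀ x' : Fin m₂ → ℝ, g₂ (T ε θ₂) x' = g₂ θ₂ x')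
    (h : EuclideanSpace ℝ (Fin D₂) → ℝ) (hdiff : DifferentiableOn ℝ h Θ₂)
    (hgen : ∀ θ₂ ∈ Θ₂, HasDerivAt (fun ε => T ε θ₂) (gradient h θ₂) 0)
    (Y : Type*) (x : Fin N → Fin m → ℝ) (y : Fin N → Y)
    (ℓ : (Fin n → ℝ) → Y → ℝ)
    (L : EuclideanSpace ℝ (Fin D₁ ⊕ Fin D₂ ⊕ Fin D₃) → ℝ)
    (hL : ∀ θ, L θ = (1 / (N : ℝ)) * ∑ i : Fin N,
      ℓ (g₁ (par1 D₁ D₂ D₃ θ) (g₂ (par2 D₁ D₂ D₃ θ) (g₃ (par3 D₁ D₂ D₃ θ) (x i)))) (y i))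
    (hLdiff : DifferentiableOn ℝ L
      {θ | par1 D₁ D₂ D₃ θ ∈ Θ₁ ∧ par2 D₁ D₂ D₃ θ ∈ Θ₂ ∧ par3 D₁ D₂ D₃ θ ∈ Θ₃})
    (I : Set ℝ) (hI : Convex ℝ I)
    (θc : ℝ → EuclideanSpace ℝ (Fin D₁ ⊕ Fin D₂ ⊕ Fin D₃))
    (hmem : ∀ t ∈ I, par1 D₁ D₂ D₃ (θc t) ∈ Θ₁ ∧ par2 D₁ D₂ D₃ (θc t) ∈ Θ₂ ∧
      par3 D₁ D₂ D₃ (θc t) ∈ Θ₃)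
    (hflow : ∀ t ∈ I, HasDerivAt θc (-(gradient L (θc t))) t) :
    ∀ s ∈ I, ∀ t ∈ I, h (par2 D₁ D₂ D₃ (θc s)) = h (par2 D₁ D₂ D₃ (θc t)) := by
  have hh : ∀ t ∈ I, DifferentiableAt ℝ h (par2 D₁ D₂ D₃ (θc t)) := fun t ht =>
    hdiff.differentiableAt (hΘ₂.mem_nhds (hmem t ht).2.1)
  refine hI.is_const_of_gradientFlow_of_inner_gradient_eq_zero
    (H := fun θ => h (par2 D₁ D₂ D₃ θ)) hflow
    (fun t ht => (hh t ht).comp _ (par2CLM D₁ D₂ D₃).differentiableAt) (fun t ht => ?_)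
  have hθ₂ := (hmem t ht).2.1
  have hLθ : DifferentiableAt ℝ L (θc t) :=
    hLdiff.differentiableAt ((isOpen_setOf_par_mem hΘ₁ hΘ₂ hΘ₃).mem_nhds (hmem t ht))
  refine inner_gradient_comp_par2_eq_zero_of_invariant hLθ (hh t ht) (hT0 _ hθ₂) (hgen _ hθ₂)
    fun ε => ?_
  simp only [hL, par1_updatePar2, par2_updatePar2, par3_updatePar2, hTinv ε _ hθ₂]

/-- A conservation law of a sub-network obtained via an invariance yields a conservation
law of the global network: if `T` leaves the middle sub-network `g₂` invariant, `h` has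
gradient equal to the infinitesimal generator of `T`, and the global network is the
composition `g(θ, x) = g₁(θ₁, g₂(θ₂, g₃(θ₃, x)))` with differentiable empirical loss
`L(θ) = (1/N) ∑ᵢ ℓ(g(θ, xᵢ), yᵢ)`, then `h(θ₂(t))` is constant along any gradient-flow
trajectory of `L` staying in `Θ = Θ₁ × Θ₂ × Θ₃`. -/
theorem subnetwork_invariance_gives_global_conservation_law
    (D₁ D₂ D₃ m m₁ m₂ n N : ℕ) (hN : 1 ≤ N)
    (Θ₁ : Set (EuclideanSpace ℝ (Fin D₁))) (hΘ₁ : IsOpen Θ₁)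
    (Θ₂ : Set (EuclideanSpace ℝ (Fin D₂))) (hΘ₂ : IsOpen Θ₂)
    (Θ₃ : Set (EuclideanSpace ℝ (Fin D₃))) (hΘ₃ : IsOpen Θ₃)
    (g₁ : EuclideanSpace ℝ (Fin D₁) → (Fin m₁ → ℝ) → (Fin n → ℝ))
    (g₂ : EuclideanSpace ℝ (Fin D₂) → (Fin m₂ → ℝ) → (Fin m₁ → ℝ))
    (g₃ : EuclideanSpace ℝ (Fin D₃) → (Fin m → ℝ) → (Fin m₂ → ℝ))
    (T : ℝ → EuclideanSpace ℝ (Fin D₂) → EuclideanSpace ℝ (Fin D₂))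
    (hTmaps : ∀ (ε : ℝ), ∀ θ₂ ∈ Θ₂, T ε θ₂ ∈ Θ₂)
    (hT0 : ∀ θ₂ ∈ Θ₂, T 0 θ₂ = θ₂)
    (hTinv : ∀ (ε : ℝ), ∀ θ₂ ∈ Θ₂, ∀ x' : Fin m₂ → ℝ, g₂ (T ε θ₂) x' = g₂ θ₂ x')
    (h : EuclideanSpace ℝ (Fin D₂) → ℝ) (hdiff : DifferentiableOn ℝ h Θ₂)
    (hgen : ∀ θ₂ ∈ Θ₂, HasDerivAt (fun ε => T ε θ₂) (gradient h θ₂) 0)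
    (Y : Type*) (x : Fin N → Fin m → ℝ) (y : Fin N → Y)
    (ℓ : (Fin n → ℝ) → Y → ℝ)
    (L : EuclideanSpace ℝ (Fin D₁ ⊕ Fin D₂ ⊕ Fin D₃) → ℝ)
    (hL : ∀ θ, L θ = (1 / (N : ℝ)) * ∑ i : Fin N,
      ℓ (g₁ (par1 D₁ D₂ D₃ θ) (g₂ (par2 D₁ D₂ D₃ θ) (g₃ (par3 D₁ D₂ D₃ θ) (x i)))) (y i))
    (hLdiff : DifferentiableOn ℝ L
      {θ | par1 D₁ D₂ D₃ θ ∈ Θ₁ ∧ par2 D₁ D₂ D₃ θ ∈ Θ₂ ∧ par3 D₁ D₂ D₃ θ ∈ Θ₃})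
    (I : Set ℝ) (hI : Convex ℝ I)
    (θc : ℝ → EuclideanSpace ℝ (Fin D₁ ⊕ Fin D₂ ⊕ Fin D₃))
    (hmem : ∀ t ∈ I, par1 D₁ D₂ D₃ (θc t) ∈ Θ₁ ∧ par2 D₁ D₂ D₃ (θc t) ∈ Θ₂ ∧
      par3 D₁ D₂ D₃ (θc t) ∈ Θ₃)
    (hflow : ∀ t ∈ I, HasDerivAt θc (-(gradient L (θc t))) t) :
    ∀ s ∈ I, ∀ t ∈ I, h (par2 D₁ D₂ D₃ (θc s)) = h (par2 D₁ D₂ D₃ (θc t)) :=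
  subnetwork_invariance_gives_global_conservation_law_general D₁ D₂ D₃ m m₁ m₂ n N Θ₁ hΘ₁ Θ₂ hΘ₂ Θ₃
    hΘ₃ g₁ g₂ g₃ T hT0 hTinv h hdiff hgen Y x y ℓ L hL hLdiff I hI θc hmem hflow
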